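/- Let d, K be natural numbers, t ∈ ℝ, and let α, σ : ℝ → ℝ be differentiable at t with α t ≠ 0. Define the scalars a = (deriv α t)/(α t), b = ((deriv α t)·(σ t) − (α t)·(deriv σ t))·(σ t)/(α t), f = (deriv α t)/(α t), and g² = deriv (fun s => (σ s)^2) t − 2·((deriv α t)/(α t))·(σ t)^2. Let u, u₁, …, u_K : E → E and s, s₁, …, s_K : E → E be functions on E = EuclideanSpace ℝ (Fin d), and let ω₁, …, ω_K ∈ ℝ be guidance strengths. Assume for all z ∈ E that u z = a • z + b • s z and uᵢ z = a • z + b • sᵢ z for every i. Then for all z ∈ E, the compositional guided vector field u z + ∑ᵢ ωᵢ • (uᵢ z − u z) equals the probability-flow ODE velocity with compositional score, namely f • z − (1/2)·g² • (s z + ∑ᵢ ωᵢ • (sᵢ z − s z)). -/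

import Mathlib

/-!
Both sides are affine in the vector fields: under the Gaussian-path identity `u = a z + b ∇log p`,
classifier-free guidance of the velocities is `a z + b ·` (the same guidance of the scores), because
the drift `a z` cancels in every difference `uᵢ − u`. It remains to match coefficients: `f = a`,
and differentiating `σ²` shows that `-(1/2) g² = b`.
-/

open Finset

def cfgGuidance {ι E : Type*} [Fintype ι] [AddCommGroup E] [Module ℝ E]
    (v : E) (vcond : ι → E) (ω : ι → ℝ) : E :=
  v + ∑ i, ω i • (vcond i - v)

theorem cfgGuidance_affine {ι E : Type*} [Fintype ι] [AddCommGroup E] [Module ℝ E]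
    (a b : ℝ) (x v : E) (vcond : ι → E) (ω : ι → ℝ) :
    cfgGuidance (a • x + b • v) (fun i => a • x + b • vcond i) ω
      = a • x + b • cfgGuidance v vcond ω := by
  have hdiff : ∀ i, ω i • ((a • x + b • vcond i) - (a • x + b • v)) = b • (ω i • (vcond i - v)) :=
    fun i => by module
  simp only [cfgGuidance, hdiff, ← smul_sum]
  module

theorem half_diffusion_sq_eq_neg_score_coeff {α σ : ℝ → ℝ} {t : ℝ}
    (hσ : DifferentiableAt ℝ σ t) (hα0 : α t ≠ 0) :
    (1 / 2) * (deriv (fun s => σ s ^ 2) t - 2 * (deriv α t / α t) * σ t ^ 2)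
      = -((deriv α t * σ t - α t * deriv σ t) * σ t / α t) := by
  rw [deriv_fun_pow hσ]
  field_simp
  ring

theorem compositional_guided_field_eq_prob_flow_velocity_general
    (d K : ℕ) (t : ℝ) (α σ : ℝ → ℝ)
    (hσ : DifferentiableAt ℝ σ t) (hα0 : α t ≠ 0)
    (a b f g2 : ℝ)
    (ha : a = deriv α t / α t)
    (hb : b = (deriv α t * σ t - α t * deriv σ t) * σ t / α t)
    (hf : f = deriv α t / α t)
    (hg2 : g2 = deriv (fun s => (σ s) ^ 2) t - 2 * (deriv α t / α t) * (σ t) ^ 2)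
    (u : EuclideanSpace ℝ (Fin d) → EuclideanSpace ℝ (Fin d))
    (ucond : Fin K → EuclideanSpace ℝ (Fin d) → EuclideanSpace ℝ (Fin d))
    (s : EuclideanSpace ℝ (Fin d) → EuclideanSpace ℝ (Fin d))
    (scond : Fin K → EuclideanSpace ℝ (Fin d) → EuclideanSpace ℝ (Fin d))
    (ω : Fin K → ℝ)
    (hu : ∀ z, u z = a • z + b • s z)
    (hucond : ∀ i z, ucond i z = a • z + b • scond i z) :
    ∀ z : EuclideanSpace ℝ (Fin d),
      u z + ∑ i, ω i • (ucond i z - u z)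
        = f • z - ((1 / 2) * g2) • (s z + ∑ i, ω i • (scond i z - s z)) := by
  intro z
  have hcoeff : (1 / 2) * g2 = -b := by
    rw [hg2, hb, half_diffusion_sq_eq_neg_score_coeff hσ hα0]
  change cfgGuidance (u z) (fun i => ucond i z) ω
    = f • z - ((1 / 2) * g2) • cfgGuidance (s z) (fun i => scond i z) ω
  simp only [hu, hucond, cfgGuidance_affine, hcoeff, hf, ← ha, neg_smul, sub_neg_eq_add]

/-- Proposition 1 (CFGen): the compositional classifier-free-guidance vector field
`u z + ∑ i, ω i • (uᵢ z − u z)` coincides with the velocity of the probability-flow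
ODE with compositional score, `f • z − (1/2)·g² • (s z + ∑ i, ω i • (sᵢ z − s z))`. -/
theorem compositional_guided_field_eq_prob_flow_velocity
    (d K : ℕ) (t : ℝ) (α σ : ℝ → ℝ)
    (hα : DifferentiableAt ℝ α t) (hσ : DifferentiableAt ℝ σ t) (hα0 : α t ≠ 0)
    (a b f g2 : ℝ)
    (ha : a = deriv α t / α t)
    (hb : b = (deriv α t * σ t - α t * deriv σ t) * σ t / α t)
    (hf : f = deriv α t / α t)
    (hg2 : g2 = deriv (fun s => (σ s) ^ 2) t - 2 * (deriv α t / α t) * (σ t) ^ 2)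
    (u : EuclideanSpace ℝ (Fin d) → EuclideanSpace ℝ (Fin d))
    (ucond : Fin K → EuclideanSpace ℝ (Fin d) → EuclideanSpace ℝ (Fin d))
    (s : EuclideanSpace ℝ (Fin d) → EuclideanSpace ℝ (Fin d))
    (scond : Fin K → EuclideanSpace ℝ (Fin d) → EuclideanSpace ℝ (Fin d))
    (ω : Fin K → ℝ)
    (hu : ∀ z, u z = a • z + b • s z)
    (hucond : ∀ i z, ucond i z = a • z + b • scond i z) :
    ∀ z : EuclideanSpace ℝ (Fin d),
      u z + ∑ i, ω i • (ucond i z - u z)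
        = f • z - ((1 / 2) * g2) • (s z + ∑ i, ω i • (scond i z - s z)) :=
  compositional_guided_field_eq_prob_flow_velocity_general d K t α σ hσ hα0 a b f g2 ha hb hf hg2 u
    ucond s scond ω hu hucond
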